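/- If a unital category is coherent (all change-of-base functors of the basic fibration f* : C/Y → C/X are coherent), then it is trivial (equivalent to the terminal category). -/

import Mathlib

/-!
In `X ⨯ X` the unital cospan `(⟨1, 0⟩, ⟨0, 1⟩)` is jointly strongly epimorphic, hence so is the
corresponding cospan over the terminal object `𝟙 (X ⨯ X)` of `C / (X ⨯ X)`. Pulling it back along
the diagonal `X ⟶ X ⨯ X` turns both legs into maps out of zero objects (a point of `X` with
`(x, 0) = (y, y)` is zero), while the pulled-back codomain is `X` itself. A jointly strongly
epimorphic pair out of zero objects forces its codomain to be zero, so `X` is zero.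
-/

open CategoryTheory CategoryTheory.Limits

universe w₂ w v u

namespace AlgCoh

variable {C : Type u} [Category.{v} C]

/-- A cospan `(f, g)` over `Z` is jointly strongly epimorphic: whenever both legs,
after postcomposition with `φ : Z ⟶ P`, factor through a monomorphism `m : M ⟶ P`,
there is a unique diagonal lift `l : Z ⟶ M` with `l ≫ m = φ`. -/
def JointlyStronglyEpi {X Y Z : C} (f : X ⟶ Z) (g : Y ⟶ Z) : Prop :=
  ∀ ⦃M P : C⦄ (m : M ⟶ P), Mono m → ∀ (φ : Z ⟶ P) (f' : X ⟶ M) (g' : Y ⟶ M),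
    f' ≫ m = f ≫ φ → g' ≫ m = g ≫ φ → ∃! l : Z ⟶ M, l ≫ m = φ

/-- A functor preserves jointly strongly epimorphic cospans. -/
def PreservesJSEPairs {D : Type w} [Category.{w₂} D] (F : C ⥤ D) : Prop :=
  ∀ ⦃X Y Z : C⦄ (f : X ⟶ Z) (g : Y ⟶ Z),
    JointlyStronglyEpi f g → JointlyStronglyEpi (F.map f) (F.map g)

/-- A coherent functor preserves finite limits and jointly strongly epimorphic pairs. -/
def CoherentFunctor {D : Type w} [Category.{w₂} D] (F : C ⥤ D) : Prop :=
  Nonempty (PreservesFiniteLimits F) ∧ PreservesJSEPairs F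

theorem JointlyStronglyEpi.isIso_of_factorThru {X Y Z M : C} {f : X ⟶ Z} {g : Y ⟶ Z}
    (h : JointlyStronglyEpi f g) (m : M ⟶ Z) [Mono m] (f' : X ⟶ M) (g' : Y ⟶ M)
    (hf : f' ≫ m = f) (hg : g' ≫ m = g) : IsIso m := by
  obtain ⟨l, hl, -⟩ := h m inferInstance (𝟙 Z) f' g' (by simpa) (by simpa)
  have : IsSplitEpi m := ⟨⟨l, hl⟩⟩
  exact isIso_of_mono_of_isSplitEpi m

theorem jointlyStronglyEpi_of_left {S : C} {A B Z : Over S} (f : A ⟶ Z) (g : B ⟶ Z)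
    (h : JointlyStronglyEpi f.left g.left) : JointlyStronglyEpi f g := by
  intro M P m hm φ f' g' hf hg
  have : Mono m.left := (Over.forget S).map_mono m
  obtain ⟨l, hl, hl_uniq⟩ := h m.left inferInstance φ.left f'.left g'.left
    (congrArg Over.Hom.left hf) (congrArg Over.Hom.left hg)
  refine ⟨Over.homMk l ?_, Over.OverMorphism.ext hl,
    fun l' hl' => Over.OverMorphism.ext (hl_uniq l'.left (congrArg Over.Hom.left hl'))⟩
  rw [← Over.w m, ← Category.assoc, hl, Over.w φ]

theorem isZero_left_of_jointlyStronglyEpi {S : C} {A B Z : Over S} {f : A ⟶ Z} {g : B ⟶ Z}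
    (h : JointlyStronglyEpi f g) (hA : IsZero A.left) (hB : IsZero B.left) :
    IsZero Z.left := by
  have : Mono f.left := hA.mono _
  have : Mono f := Over.mono_of_mono_left f
  have : IsIso f := h.isIso_of_factorThru f (𝟙 A)
    (Over.homMk (hB.to_ A.left) (hB.eq_of_src _ _)) (Category.id_comp f)
    (Over.OverMorphism.ext (hB.eq_of_src _ _))
  exact hA.of_iso (asIso ((Over.forget S).map f)).symm

section

variable [HasZeroMorphisms C] [HasFiniteLimits C]

theorem isZero_pullback_lift_id_zero_diag (X : C) :
    IsZero (pullback (prod.lift (𝟙 X) 0) (diag X)) := by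
  have h := pullback.condition (f := prod.lift (𝟙 X) (0 : X ⟶ X)) (g := diag X)
  have h₁ := congrArg (· ≫ prod.fst) h
  have h₂ := congrArg (· ≫ prod.snd) h
  simp only [Category.assoc, prod.lift_fst, prod.lift_snd, diag, Category.comp_id,
    comp_zero] at h₁ h₂
  rw [IsZero.iff_id_eq_zero]
  apply pullback.hom_ext <;> simp [h₁, ← h₂]

theorem isZero_pullback_lift_zero_id_diag (X : C) :
    IsZero (pullback (prod.lift 0 (𝟙 X)) (diag X)) := by
  have h := pullback.condition (f := prod.lift (0 : X ⟶ X) (𝟙 X)) (g := diag X)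
  have h₁ := congrArg (· ≫ prod.fst) h
  have h₂ := congrArg (· ≫ prod.snd) h
  simp only [Category.assoc, prod.lift_fst, prod.lift_snd, diag, Category.comp_id,
    comp_zero] at h₁ h₂
  rw [IsZero.iff_id_eq_zero]
  apply pullback.hom_ext <;> simp [h₂, ← h₁]

end

theorem unital_coherent_trivial_general
    [HasZeroMorphisms C] [HasFiniteLimits C]
    (hU : ∀ X Y : C,
      JointlyStronglyEpi (prod.lift (𝟙 X) (0 : X ⟶ Y)) (prod.lift (0 : Y ⟶ X) (𝟙 Y)))
    (hcoh : ∀ {X Y : C} (f : X ⟶ Y), CoherentFunctor (Over.pullback f)) :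
    ∀ X : C, IsZero X := by
  intro X
  let T : Over (X ⨯ X) := Over.mk (𝟙 _)
  have hJ : JointlyStronglyEpi
      (Over.homMk (U := Over.mk (prod.lift (𝟙 X) 0)) (V := T) (prod.lift (𝟙 X) 0))
      (Over.homMk (U := Over.mk (prod.lift 0 (𝟙 X))) (V := T) (prod.lift 0 (𝟙 X))) :=
    jointlyStronglyEpi_of_left _ _ (hU X X)
  have hT : IsZero (pullback (𝟙 (X ⨯ X)) (diag X)) :=
    isZero_left_of_jointlyStronglyEpi ((hcoh (diag X)).2 _ _ hJ)
      (isZero_pullback_lift_id_zero_diag X) (isZero_pullback_lift_zero_id_diag X)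
  exact hT.of_iso (asIso (pullback.snd _ _)).symm

/-- If a unital category is coherent (it is regular with finite coproducts and
every change-of-base functor of the basic fibration is coherent), then it is
trivial: every object is a zero object. -/
theorem unital_coherent_trivial
    [HasZeroObject C] [HasZeroMorphisms C] [HasFiniteLimits C] [HasFiniteCoproducts C]
    (hcoeq : ∀ {X Y : C} (f : X ⟶ Y), HasCoequalizer (pullback.fst f f) (pullback.snd f f))
    (hstab : ∀ {X Y Z : C} (f : X ⟶ Z) (g : Y ⟶ Z),
      Nonempty (RegularEpi g) → Nonempty (RegularEpi (pullback.fst f g)))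
    (hU : ∀ X Y : C,
      JointlyStronglyEpi (prod.lift (𝟙 X) (0 : X ⟶ Y)) (prod.lift (0 : Y ⟶ X) (𝟙 Y)))
    (hcoh : ∀ {X Y : C} (f : X ⟶ Y), CoherentFunctor (Over.pullback f)) :
    ∀ X : C, IsZero X :=
  unital_coherent_trivial_general hU hcoh

end AlgCoh
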